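/- Let L be a positive integer and define D_L(z) = (2L+1)^{−1} ∑_{n=0}^{L} C(2L+1, 2n) z^{n−L} for z ∈ ℂ \ {0}. Then for every ω ∈ ℝ, D_L(e^{iω}) = (2(2L+1))^{−1} e^{−iω(2L−1)/4} [ (2 cos(ω/4))^{2L+1} + (−2i sin(ω/4))^{2L+1} ]. -/

import Mathlib

open Complex

/-- The Thiran common factor `D_L` (closed binomial form). -/
noncomputable def DL (L : ℕ) (z : ℂ) : ℂ :=
  (1 / (2 * (L : ℂ) + 1)) *
    ∑ n ∈ Finset.range (L + 1), (Nat.choose (2 * L + 1) (2 * n) : ℂ) * z ^ ((n : ℤ) - (L : ℤ))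

/-!
Write `z = u ^ 4`. Then `∑ C(2L+1, 2n) z^(n-L)` is `u^(-4L)` times the even part of the
binomial expansion of `(1 + u²)^(2L+1)`, that is `((1 + u²)^(2L+1) + (1 - u²)^(2L+1)) / 2`.
Since `1 ± u² = u (u⁻¹ ± u)`, this equals `u^(1-2L) ((u + u⁻¹)^(2L+1) + (u⁻¹ - u)^(2L+1)) / 2`,
and for `u = e^(iω/4)` the two brackets are `2 cos(ω/4)` and `-2i sin(ω/4)`.
-/

open Finset

theorem Finset.sum_range_two_mul {M : Type*} [AddCommMonoid M] (f : ℕ → M) (m : ℕ) :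
    ∑ k ∈ range (2 * m), f k = ∑ n ∈ range m, (f (2 * n) + f (2 * n + 1)) := by
  induction m with
  | zero => simp
  | succ m ih => rw [Nat.mul_succ, sum_range_succ, sum_range_succ, ih, sum_range_succ, add_assoc]

theorem two_mul_sum_choose_even_mul_pow {R : Type*} [CommRing R] (t : R) (m : ℕ) :
    2 * ∑ n ∈ range (m + 1), ((2 * m + 1).choose (2 * n) : R) * t ^ (2 * n) =
      (1 + t) ^ (2 * m + 1) + (1 - t) ^ (2 * m + 1) := by
  have binomial (s : R) :
      (1 + s) ^ (2 * m + 1) = ∑ k ∈ range (2 * (m + 1)), ((2 * m + 1).choose k : R) * s ^ k := by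
    rw [add_comm, add_pow]
    exact sum_congr rfl fun k _ => by ring
  rw [binomial, sub_eq_add_neg, binomial, ← sum_add_distrib, sum_range_two_mul, mul_sum]
  refine sum_congr rfl fun n _ => ?_
  rw [(even_two_mul n).neg_pow, (odd_two_mul_add_one n).neg_pow]
  ring

theorem DL_pow_four {u : ℂ} (hu : u ≠ 0) (L : ℕ) :
    DL L (u ^ 4) = 1 / (2 * (2 * (L : ℂ) + 1)) * u ^ (1 - 2 * (L : ℤ)) *
      ((u + u⁻¹) ^ (2 * L + 1) + (u⁻¹ - u) ^ (2 * L + 1)) := by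
  have hpow (n : ℕ) : (u ^ 4) ^ ((n : ℤ) - L) = (u ^ 2) ^ (2 * n) * u ^ (-4 * (L : ℤ)) := by
    rw [← pow_mul, ← zpow_natCast, ← zpow_natCast u, ← zpow_mul, ← zpow_add₀ hu]
    congr 1; push_cast; ring
  have hplus : 1 + u ^ 2 = u * (u + u⁻¹) := by field_simp; ring
  have hminus : 1 - u ^ 2 = u * (u⁻¹ - u) := by field_simp
  have hshift : u ^ (2 * L + 1) * u ^ (-4 * (L : ℤ)) = u ^ (1 - 2 * (L : ℤ)) := by
    rw [← zpow_natCast, ← zpow_add₀ hu]; congr 1; push_cast; ring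
  have heven := two_mul_sum_choose_even_mul_pow (u ^ 2) L
  rw [hplus, hminus, mul_pow, mul_pow, ← mul_add] at heven
  rw [DL, ← hshift, div_mul_eq_div_div_swap]
  simp_rw [hpow, ← mul_assoc, ← sum_mul]
  linear_combination (1 / (2 * (L : ℂ) + 1) / 2) * u ^ (-4 * (L : ℤ)) * heven

theorem exp_mul_I_add_inv (y : ℂ) : exp (y * I) + (exp (y * I))⁻¹ = 2 * cos y := by
  rw [two_cos, ← exp_neg, neg_mul]

theorem exp_mul_I_inv_sub (y : ℂ) : (exp (y * I))⁻¹ - exp (y * I) = -(2 * I * sin y) := by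
  rw [← exp_neg, ← neg_mul]
  linear_combination I * two_sin y + (exp (-y * I) - exp (y * I)) * I_mul_I

theorem DL_on_circle (L : ℕ) (ω : ℝ) :
    DL L (Complex.exp (Complex.I * (ω : ℂ))) =
      (1 / (2 * (2 * (L : ℂ) + 1))) *
        Complex.exp (-(Complex.I * (ω : ℂ) * (2 * (L : ℂ) - 1) / 4)) *
        ((2 * (Real.cos (ω / 4) : ℂ)) ^ (2 * L + 1) +
          (-(2 * Complex.I * (Real.sin (ω / 4) : ℂ))) ^ (2 * L + 1)) := by
  have hfour : exp (I * ω) = exp ((ω / 4 : ℝ) * I) ^ 4 := by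
    rw [← exp_nat_mul]; congr 1; push_cast; ring
  have hphase :
      exp ((ω / 4 : ℝ) * I) ^ (1 - 2 * (L : ℤ)) = exp (-(I * ω * (2 * L - 1) / 4)) := by
    rw [← exp_int_mul]; congr 1; push_cast; ring
  rw [hfour, DL_pow_four (exp_ne_zero _), exp_mul_I_add_inv, exp_mul_I_inv_sub, hphase,
    ofReal_cos, ofReal_sin]
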